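/- Let L be a finite-dimensional non-abelian nilpotent Lie algebra. Then the exterior center Z^∧(L) is contained in the derived subalgebra L². -/

import Mathlib

open Module

/-- The exterior center `Z^∧(L)` of `L`, computed from a free presentation
`π : F → L`:  `x ∈ Z^∧(L)` iff `x ∧ y = 0` in `L ∧ L ≅ F²/[R,F]` for all `y ∈ L`,
i.e. the bracket of any lift of `x` with any element of `F` lies in `[R,F]`. -/
def lieExteriorCenter (K : Type) [Field K] (X : Type) {L : Type}
    [LieRing L] [LieAlgebra K L] (π : FreeLieAlgebra K X →ₗ⁅K⁆ L) : Set L :=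
  {x : L | ∀ a : FreeLieAlgebra K X, π a = x → ∀ b : FreeLieAlgebra K X,
    ⁅a, b⁆ ∈ (⁅π.ker, (⊤ : LieIdeal K (FreeLieAlgebra K X))⁆ :
      LieIdeal K (FreeLieAlgebra K X))}

/-! If `x ∉ L²`, there is `y` with `x, y` linearly independent modulo `L²`: otherwise
`L = Kx + L²`, so `L² = [L, L] ⊆ L³` and nilpotency forces `L² = 0`. Functionals `α, β`
vanishing on `L²` and separating `x, y` give the trivial-coefficient 2-cocycle `ω = α ∧ β` with
`ω(x, y) ≠ 0`. A free presentation `π : F → L` lifts to the central extension of `L` defined by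
`ω`; the lift kills `[R, F]` because `R = ker π` lands in the centre. For `x` in the exterior
centre the lift of `[x̃, ỹ]` therefore vanishes, yet its central component is `ω(x, y)`. -/

namespace LieModule

variable {R L M : Type*} [CommRing R] [LieRing L] [LieAlgebra R L] [AddCommGroup M] [Module R M]
  [LieRingModule L M]

theorem lie_mem_lowerCentralSeries_succ (x : L) {m : M} {k : ℕ}
    (hm : m ∈ lowerCentralSeries R L M k) : ⁅x, m⁆ ∈ lowerCentralSeries R L M (k + 1) := by
  rw [lowerCentralSeries_succ]
  exact LieSubmodule.lie_mem_lie (LieSubmodule.mem_top x) hm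

variable [LieModule R L M]

theorem lowerCentralSeries_eq_bot_of_le_succ [IsNilpotent L M] {k : ℕ}
    (h : lowerCentralSeries R L M k ≤ lowerCentralSeries R L M (k + 1)) :
    lowerCentralSeries R L M k = ⊥ := by
  have hle : ∀ n, lowerCentralSeries R L M k ≤ lowerCentralSeries R L M (k + n) := by
    intro n
    induction n with
    | zero => rfl
    | succ n ih =>
      calc lowerCentralSeries R L M k ≤ lowerCentralSeries R L M (k + 1) := h
        _ = ⁅(⊤ : LieIdeal R L), lowerCentralSeries R L M k⁆ := lowerCentralSeries_succ ..
        _ ≤ ⁅(⊤ : LieIdeal R L), lowerCentralSeries R L M (k + n)⁆ :=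
          LieSubmodule.mono_lie_right _ ih
        _ = lowerCentralSeries R L M (k + (n + 1)) := (lowerCentralSeries_succ ..).symm
  obtain ⟨n, hn⟩ := IsNilpotent.nilpotent R L M
  exact eq_bot_iff.2 <|
    (hle n).trans <| (antitone_lowerCentralSeries R L M (Nat.le_add_left n k)).trans hn.le

theorem lowerCentralSeries_one_le_two_of_sup_span_eq_top {x : L}
    (h : (lowerCentralSeries R L L 1 : Submodule R L) ⊔ Submodule.span R {x} = ⊤) :
    lowerCentralSeries R L L 1 ≤ lowerCentralSeries R L L 2 := by
  have hdecomp (v : L) : ∃ d ∈ lowerCentralSeries R L L 1, ∃ c : R, v = d + c • x := by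
    obtain ⟨d, hd, _, hs, rfl⟩ := Submodule.mem_sup.1 (h ▸ Submodule.mem_top : v ∈ _)
    obtain ⟨c, rfl⟩ := Submodule.mem_span_singleton.1 hs
    exact ⟨d, hd, c, rfl⟩
  have hx (u : L) : ⁅u, x⁆ ∈ lowerCentralSeries R L L 2 := by
    obtain ⟨d, hd, c, rfl⟩ := hdecomp u
    rw [add_lie, smul_lie, lie_self, smul_zero, add_zero, ← lie_skew]
    exact neg_mem (lie_mem_lowerCentralSeries_succ x hd)
  rw [lowerCentralSeries_succ, lowerCentralSeries_zero, LieSubmodule.lie_le_iff]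
  rintro u - v -
  obtain ⟨d, hd, c, rfl⟩ := hdecomp v
  rw [lie_add, lie_smul]
  exact add_mem (lie_mem_lowerCentralSeries_succ u hd) (Submodule.smul_mem _ c (hx u))

end LieModule

open LieModule in
theorem LieAlgebra.isLieAbelian_of_sup_span_eq_top {R L : Type*} [CommRing R] [LieRing L]
    [LieAlgebra R L] [LieRing.IsNilpotent L] {x : L}
    (h : (lowerCentralSeries R L L 1 : Submodule R L) ⊔ Submodule.span R {x} = ⊤) :
    IsLieAbelian L :=
  (trivial_iff_lower_central_eq_bot R L L).2 <|
    lowerCentralSeries_eq_bot_of_le_succ (lowerCentralSeries_one_le_two_of_sup_span_eq_top h)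

namespace LieAlgebra.ofTwoCocycle

open LieModule LieModule.Cohomology

variable {R L M : Type*} [CommRing R] [LieRing L] [LieAlgebra R L] [AddCommGroup M] [Module R M]
  [LieRingModule L M] [LieModule R L M] (c : twoCocycle R L M)

def proj : ofTwoCocycle c →ₗ⁅R⁆ L where
  toFun x := ((ofProd c).symm x).1
  map_add' _ _ := rfl
  map_smul' _ _ := rfl
  map_lie' := rfl

noncomputable def liftFree {X : Type*} (π : FreeLieAlgebra R X →ₗ⁅R⁆ L) :
    FreeLieAlgebra R X →ₗ⁅R⁆ ofTwoCocycle c :=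
  FreeLieAlgebra.lift R fun i => ofProd c (π (FreeLieAlgebra.of R i), 0)

theorem proj_comp_liftFree {X : Type*} (π : FreeLieAlgebra R X →ₗ⁅R⁆ L) :
    (proj c).comp (liftFree c π) = π :=
  FreeLieAlgebra.hom_ext fun i => by
    rw [LieHom.comp_apply, liftFree, FreeLieAlgebra.lift_of_apply]
    rfl

variable [IsTrivial L M]

theorem lie_eq_zero_of_proj_eq_zero {z : ofTwoCocycle c} (hz : proj c z = 0)
    (w : ofTwoCocycle c) : ⁅z, w⁆ = 0 := by
  have hz1 : ((ofProd c).symm z).1 = 0 := hz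
  rw [bracket_ofTwoCocycle, hz1]
  simp [trivial_lie_zero, ← of_zero]

theorem snd_symm_ofProd_lie (z w : ofTwoCocycle c) :
    ((ofProd c).symm ⁅z, w⁆).2 = c.1 (proj c z) (proj c w) := by
  simp only [bracket_ofTwoCocycle, Equiv.symm_apply_apply, trivial_lie_zero, sub_zero, add_zero]
  rfl

end LieAlgebra.ofTwoCocycle

theorem LieModule.Cohomology.mem_twoCocycle_of_apply_lie_eq_zero {R L M : Type*} [CommRing R]
    [LieRing L] [LieAlgebra R L] [AddCommGroup M] [Module R M] [LieRingModule L M]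
    [LieModule R L M] [LieModule.IsTrivial L M] (a : twoCochain R L M)
    (h : ∀ x y z : L, a x ⁅y, z⁆ = 0) : a ∈ twoCocycle R L M := by
  refine (mem_twoCocycle_iff_of_trivial R L M a).2 fun x y z => ?_
  rw [h, ← twoCochain_skew, h, h, neg_zero, add_zero]

theorem Submodule.exists_dual_mul_sub_mul_ne_zero {K V : Type*} [Field K] [AddCommGroup V]
    [Module K V] {p : Submodule K V} {x y : V} (hx : x ∉ p) (hy : y ∉ p ⊔ span K {x}) :
    ∃ α β : Module.Dual K V, p ≤ LinearMap.ker α ∧ p ≤ LinearMap.ker β ∧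
      α x * β y - β x * α y ≠ 0 := by
  obtain ⟨α, hαx, hα⟩ := exists_dual_map_eq_bot_of_notMem hx inferInstance
  obtain ⟨β, hβy, hβ⟩ := exists_dual_map_eq_bot_of_notMem hy inferInstance
  rw [← LinearMap.le_ker_iff_map] at hα hβ
  have hβx : β x = 0 := hβ (mem_sup_right (mem_span_singleton_self x))
  refine ⟨α, β, hα, le_sup_left.trans hβ, ?_⟩
  rw [hβx, zero_mul, sub_zero]
  exact mul_ne_zero hαx hβy

section Wedge

open LieModule LieModule.Cohomology

variable {R L : Type*} [CommRing R] [LieRing L] [LieAlgebra R L]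

def wedgeTwoCocycle (α β : Module.Dual R L) (hα : ∀ u v : L, α ⁅u, v⁆ = 0)
    (hβ : ∀ u v : L, β ⁅u, v⁆ = 0) : twoCocycle R L (TrivialLieModule R L R) where
  val :=
    ⟨((LinearMap.mul R R).compl₁₂ α β - (LinearMap.mul R R).compl₁₂ β α).compr₂
      (TrivialLieModule.equiv R L R).symm, fun u => by simp [mul_comm]⟩
  property := mem_twoCocycle_of_apply_lie_eq_zero _ fun u v w => by
    change (TrivialLieModule.equiv R L R).symm (α u * β ⁅v, w⁆ - β u * α ⁅v, w⁆) = 0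
    rw [hα, hβ, mul_zero, mul_zero, sub_zero, map_zero]

theorem wedgeTwoCocycle_apply (α β : Module.Dual R L) (hα : ∀ u v : L, α ⁅u, v⁆ = 0)
    (hβ : ∀ u v : L, β ⁅u, v⁆ = 0) (u v : L) :
    (wedgeTwoCocycle α β hα hβ).1 u v =
      (TrivialLieModule.equiv R L R).symm (α u * β v - β u * α v) :=
  rfl

end Wedge

open LieModule LieModule.Cohomology LieAlgebra.ofTwoCocycle in
theorem twoCocycle_apply_eq_zero_of_mem_lieExteriorCenter {K L X : Type} [Field K] [LieRing L]
    [LieAlgebra K L] {M : Type*} [AddCommGroup M] [Module K M] [LieRingModule L M]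
    [LieModule K L M] [IsTrivial L M] (c : twoCocycle K L M)
    {π : FreeLieAlgebra K X →ₗ⁅K⁆ L} (hπ : Function.Surjective π) {x : L}
    (hx : x ∈ lieExteriorCenter K X π) (y : L) : c.1 x y = 0 := by
  obtain ⟨a, rfl⟩ := hπ x
  obtain ⟨b, rfl⟩ := hπ y
  set ψ := liftFree c π
  have hproj (f : FreeLieAlgebra K X) : proj c (ψ f) = π f :=
    LieHom.congr_fun (proj_comp_liftFree c π) f
  have hker : ⁅π.ker, (⊤ : LieIdeal K (FreeLieAlgebra K X))⁆ ≤ ψ.ker := by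
    rw [LieSubmodule.lie_le_iff]
    rintro r hr f -
    rw [LieHom.mem_ker, LieHom.map_lie]
    exact lie_eq_zero_of_proj_eq_zero c (by rwa [hproj]) _
  have hab := snd_symm_ofProd_lie c (ψ a) (ψ b)
  rw [← LieHom.map_lie, LieHom.mem_ker.1 (hker (hx a rfl b)), hproj, hproj] at hab
  simpa using hab.symm

open LieModule in
theorem exterior_center_le_derived (K L : Type) [Field K] [LieRing L] [LieAlgebra K L]
    [LieRing.IsNilpotent L] (hna : ¬IsLieAbelian L) :
    ∀ (X : Type) (π : FreeLieAlgebra K X →ₗ⁅K⁆ L), Function.Surjective π →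
      ∀ x ∈ lieExteriorCenter K X π,
        x ∈ (LieModule.lowerCentralSeries K L L 1 : LieSubmodule K L L) := by
  intro X π hπ x hx
  by_contra hxD
  obtain ⟨y, hy⟩ :
      ∃ y, y ∉ (lowerCentralSeries K L L 1 : Submodule K L) ⊔ Submodule.span K {x} := by
    by_contra! h
    exact hna (LieAlgebra.isLieAbelian_of_sup_span_eq_top (eq_top_iff.2 fun y _ => h y))
  obtain ⟨α, β, hα, hβ, hne⟩ := Submodule.exists_dual_mul_sub_mul_ne_zero hxD hy
  have hbr {f : Module.Dual K L} (hf : (lowerCentralSeries K L L 1 : Submodule K L) ≤ f.ker)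
      (u v : L) : f ⁅u, v⁆ = 0 :=
    hf (lie_mem_lowerCentralSeries_succ u (by simp))
  have hω := twoCocycle_apply_eq_zero_of_mem_lieExteriorCenter
    (wedgeTwoCocycle α β (hbr hα) (hbr hβ)) hπ hx y
  rw [wedgeTwoCocycle_apply, LinearEquiv.map_eq_zero_iff] at hω
  exact hne hω
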